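/- arXiv:1504.00559 — 2 statements merged into one kernel-verified Lean document; each statement's English description precedes it below -/
import Mathlib

section
/- There exists a constant C, depending only on M and β, such that every function h : [0,1] → ℝ that is nondecreasing, right-continuous with left limits, and satisfies h(1/n) ≥ −Mn and h(1 − 1/n) ≤ Mn for every natural number n ≥ 1, obeys the uniform bound ∫₀¹ h(u)² κ(u) du ≤ C. -/
open MeasureTheory Set Filter

noncomputable section

/-- The density `κ(u) = u^β` for `u ∈ [0,1/2]` and `κ(u) = (1-u)^β` for `u ∈ (1/2,1]`. -/
def kappa (β : ℝ) (u : ℝ) : ℝ := if u ≤ 1/2 then u ^ β else (1 - u) ^ β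

/-- `h` is nondecreasing and right-continuous with left limits on `[0,1]`. -/
def IsCadlagNondecreasing (h : ℝ → ℝ) : Prop :=
  MonotoneOn h (Set.Icc 0 1) ∧
  (∀ x ∈ Set.Ico (0:ℝ) 1, Tendsto h (nhdsWithin x (Set.Ioc x 1)) (nhds (h x))) ∧
  (∀ x ∈ Set.Ioc (0:ℝ) 1, ∃ l : ℝ, Tendsto h (nhdsWithin x (Set.Ico 0 x)) (nhds l))

/-!
Monotonicity transfers the bounds at the grid points `1/n` and `1 - 1/n` to every point:
`-2M/u ≤ h(u) ≤ 2M/(1-u)` on `(0,1)`. Hence `h(u)² κ(u) ≤ 4M² (u^(β-2) + (1-u)^(β-2))`, since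
`κ(u)` is at most both `u^β` and `(1-u)^β`, and the right-hand side is integrable because
`β - 2 > -1`.
-/

section Kappa

variable {β u : ℝ}

lemma kappa_nonneg (hu₀ : 0 ≤ u) (hu₁ : u ≤ 1) : 0 ≤ kappa β u := by
  unfold kappa
  split_ifs
  · exact Real.rpow_nonneg hu₀ β
  · exact Real.rpow_nonneg (sub_nonneg.2 hu₁) β

lemma kappa_one_sub : kappa β (1 - u) = kappa β u := by
  unfold kappa
  split_ifs with h₁ h₂ h₂
  · rw [show u = 1 / 2 by linarith]; norm_num
  · rfl
  · rw [sub_sub_cancel]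
  · linarith

lemma kappa_le_rpow (hβ : 0 ≤ β) (hu : u ≤ 1) : kappa β u ≤ u ^ β := by
  unfold kappa
  split_ifs
  · exact le_rfl
  · exact Real.rpow_le_rpow (by linarith) (by linarith) hβ

lemma kappa_le_one_sub_rpow (hβ : 0 ≤ β) (hu : 0 ≤ u) :
    kappa β u ≤ (1 - u) ^ β := by
  rw [← kappa_one_sub]
  exact kappa_le_rpow hβ (by linarith)

end Kappa

lemma div_sq_mul_rpow (c : ℝ) {x : ℝ} (hx : 0 < x) (β : ℝ) :
    (c / x) ^ 2 * x ^ β = c ^ 2 * x ^ (β - 2) := by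
  rw [show β - 2 = β - (2 : ℕ) by norm_num, Real.rpow_sub_natCast hx.ne']
  field_simp

section GridBounds

variable {h : ℝ → ℝ} {M u : ℝ}

lemma neg_two_mul_div_le_of_monotoneOn (hM : 0 ≤ M) (hh : MonotoneOn h (Icc 0 1))
    (hbd : ∀ n : ℕ, 1 ≤ n → -(M * n) ≤ h (1 / n)) (hu : u ∈ Ioc 0 1) :
    -(2 * M / u) ≤ h u := by
  obtain ⟨hu₀, hu₁⟩ := hu
  set n := ⌈1 / u⌉₊
  have hn : 1 ≤ n := Nat.one_le_ceil_iff.2 (by positivity)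
  have hn₀ : (0 : ℝ) < n := by exact_mod_cast hn
  have hn_le : (n : ℝ) ≤ 2 / u := by
    have : 1 / u + 1 ≤ 2 / u := by
      rw [div_add_one hu₀.ne', div_le_div_iff_of_pos_right hu₀]; linarith
    linarith [Nat.ceil_lt_add_one (by positivity : (0 : ℝ) ≤ 1 / u)]
  have hn_inv : 1 / (n : ℝ) ≤ u := (one_div_le hn₀ hu₀).2 (Nat.le_ceil _)
  calc -(2 * M / u) = -(M * (2 / u)) := by ring
    _ ≤ -(M * n) := neg_le_neg (mul_le_mul_of_nonneg_left hn_le hM)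
    _ ≤ h (1 / n) := hbd n hn
    _ ≤ h u := hh ⟨by positivity, hn_inv.trans hu₁⟩ ⟨hu₀.le, hu₁⟩ hn_inv

lemma le_two_mul_div_one_sub_of_monotoneOn (hM : 0 ≤ M) (hh : MonotoneOn h (Icc 0 1))
    (hbd : ∀ n : ℕ, 1 ≤ n → h (1 - 1 / n) ≤ M * n) (hu : u ∈ Ico 0 1) :
    h u ≤ 2 * M / (1 - u) := by
  have hrefl : MonotoneOn (fun v => -h (1 - v)) (Icc 0 1) := fun a ha b hb hab =>
    neg_le_neg (hh ⟨by linarith [hb.2], by linarith [hb.1]⟩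
      ⟨by linarith [ha.2], by linarith [ha.1]⟩ (by linarith))
  have := neg_two_mul_div_le_of_monotoneOn (u := 1 - u) hM hrefl
    (fun n hn => neg_le_neg (hbd n hn)) ⟨by linarith [hu.2], by linarith [hu.1]⟩
  simpa using this

lemma sq_mul_kappa_le {β : ℝ} (hβ : 0 ≤ β) (hM : 0 ≤ M) (hh : MonotoneOn h (Icc 0 1))
    (hbd : ∀ n : ℕ, 1 ≤ n → -(M * n) ≤ h (1 / n) ∧ h (1 - 1 / n) ≤ M * n)
    (hu : u ∈ Ioo 0 1) :
    h u ^ 2 * kappa β u ≤ (2 * M) ^ 2 * (u ^ (β - 2) + (1 - u) ^ (β - 2)) := by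
  obtain ⟨hu₀, hu₁⟩ := hu
  have hv₀ : 0 < 1 - u := sub_pos.2 hu₁
  have hlow := neg_two_mul_div_le_of_monotoneOn hM hh (fun n hn => (hbd n hn).1)
    ⟨hu₀, hu₁.le⟩
  have hup := le_two_mul_div_one_sub_of_monotoneOn hM hh (fun n hn => (hbd n hn).2)
    ⟨hu₀.le, hu₁⟩
  have hsq : h u ^ 2 ≤ (2 * M / u) ^ 2 + (2 * M / (1 - u)) ^ 2 := by
    have : 0 ≤ 2 * M / u := by positivity
    have : 0 ≤ 2 * M / (1 - u) := by positivity
    rcases le_total 0 (h u) with hx | hx <;> nlinarith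
  calc h u ^ 2 * kappa β u
      ≤ (2 * M / u) ^ 2 * kappa β u + (2 * M / (1 - u)) ^ 2 * kappa β u := by
        rw [← add_mul]; exact mul_le_mul_of_nonneg_right hsq (kappa_nonneg hu₀.le hu₁.le)
    _ ≤ (2 * M / u) ^ 2 * u ^ β + (2 * M / (1 - u)) ^ 2 * (1 - u) ^ β := by
        gcongr
        · exact kappa_le_rpow hβ hu₁.le
        · exact kappa_le_one_sub_rpow hβ hu₀.le
    _ = (2 * M) ^ 2 * (u ^ (β - 2) + (1 - u) ^ (β - 2)) := by
        rw [div_sq_mul_rpow _ hu₀, div_sq_mul_rpow _ hv₀, mul_add]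

end GridBounds

lemma integrableOn_rpow_add_one_sub_rpow {r : ℝ} (hr : -1 < r) :
    IntegrableOn (fun u : ℝ => u ^ r + (1 - u) ^ r) (Icc 0 1) := by
  have hleft : IntervalIntegrable (fun u : ℝ => u ^ r) volume 0 1 :=
    intervalIntegral.intervalIntegrable_rpow' hr
  have hright : IntervalIntegrable (fun u : ℝ => (1 - u) ^ r) volume 0 1 := by
    simpa using (hleft.comp_sub_left 1).symm
  exact (intervalIntegrable_iff_integrableOn_Icc_of_le zero_le_one).1 (hleft.add hright)

/-- There is a constant `C`, depending only on `M` and `β`, such that every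
nondecreasing càdlàg `h : [0,1] → ℝ` with `h(1/n) ≥ -Mn` and `h(1 - 1/n) ≤ Mn` for all `n ≥ 1`
satisfies `∫₀¹ h(u)² κ(u) du ≤ C`. -/
theorem uniform_L2mu_bound (β : ℝ) (hβ : 1 < β) (M : ℝ) (hM : 0 < M) :
    ∃ C : ℝ, ∀ h : ℝ → ℝ, IsCadlagNondecreasing h →
      (∀ n : ℕ, 1 ≤ n → -(M * n) ≤ h (1 / n) ∧ h (1 - 1 / n) ≤ M * n) →
      ∫⁻ u in Set.Icc (0:ℝ) 1, ENNReal.ofReal ((h u) ^ 2 * kappa β u)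
        ≤ ENNReal.ofReal C := by
  set g : ℝ → ℝ := fun u => (2 * M) ^ 2 * (u ^ (β - 2) + (1 - u) ^ (β - 2))
  have hg_int : IntegrableOn g (Icc 0 1) :=
    (integrableOn_rpow_add_one_sub_rpow (by linarith)).const_mul _
  have hg_nonneg : 0 ≤ᵐ[volume.restrict (Icc 0 1)] g :=
    ae_restrict_of_forall_mem measurableSet_Icc fun u hu =>
      mul_nonneg (sq_nonneg _)
        (add_nonneg (Real.rpow_nonneg hu.1 _) (Real.rpow_nonneg (sub_nonneg.2 hu.2) _))
  refine ⟨∫ u in Icc 0 1, g u, fun h hh hbd => ?_⟩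
  rw [ofReal_integral_eq_lintegral_ofReal hg_int hg_nonneg,
    ← Measure.restrict_congr_set Ioo_ae_eq_Icc]
  exact setLIntegral_mono' measurableSet_Ioo fun u hu =>
    ENNReal.ofReal_le_ofReal (sq_mul_kappa_le (by linarith) hM.le hh.1 hbd hu)

end
end

section
/- Let φ ∈ C([0,T], L2(μ)) with φ(0) = id (the identity function u ↦ u on [0,1]) and let k ∈ L2([0,T], L2(λ)). Suppose that for every h ∈ H one has ⟨h(T), φ(T)⟩_{L2(λ)} − ⟨h(0), id⟩_{L2(λ)} − ∫₀ᵀ ⟨ḣ(s), φ(s)⟩_{L2(λ)} ds = ∫₀ᵀ ⟨h(s), k(s)⟩_{L2(λ)} ds. Then φ takes values in L2(λ), is continuous and absolutely continuous as an L2(λ)-valued function, and its derivative equals k; that is, φ(t) = id + ∫₀ᵗ k(s) ds in L2(λ) for every t ∈ [0,T]. -/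
/-!
Fix a measurable set `S` on which `κ ≥ c > 0`. Then `1_S ∈ L²(μ⁻¹)`, and `f ↦ ∫_S f dλ` is
represented on `L²(μ)` by `1_S κ⁻¹`, so `F(s) = ∫_S φ(s) dλ` is continuous. Testing the identity
against `h(s) = (t - s)⁺ 1_S`, which vanishes at `T`, gives
`∫₀ᵗ F = t ∫_S u du + ∫₀ᵗ (t - s) K(s) ds` with `K(s) = ∫_S k(s) dλ`. Integrating by parts, the
right side is the primitive of the continuous function `∫_S u du + ∫₀^· K`, hence
`F(t) = ∫_S u du + ∫₀ᵗ K`. As `κ > 0` a.e., the sets `{κ ≥ c}` exhaust `[0,1]` up to a null set, so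
these set integrals determine `φ(t) = id + ∫₀ᵗ k` λ-a.e.
-/

open MeasureTheory Set Filter
open scoped ENNReal NNReal

noncomputable section

/-- Lebesgue measure restricted to `[0,1]`. -/
def lambda01 : Measure ℝ := volume.restrict (Set.Icc (0:ℝ) 1)

/-- The measure `μ(du) = κ(u) du` on `[0,1]`. -/
def muMeas (β : ℝ) : Measure ℝ :=
  lambda01.withDensity (fun u => ENNReal.ofReal (kappa β u))

/-- The measure `μ⁻¹(du) = κ(u)⁻¹ du` on `[0,1]`. -/
def muInv (β : ℝ) : Measure ℝ :=
  lambda01.withDensity (fun u => ENNReal.ofReal ((kappa β u)⁻¹))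

/-- Membership in `H`: `h ∈ C([0,T], L²(μ⁻¹))` is absolutely continuous with derivative
`hdot ∈ L²([0,T], L²(μ⁻¹))`. -/
def MemH (T β : ℝ) (h hdot : ℝ → Lp ℝ 2 (muInv β)) : Prop :=
  ContinuousOn h (Set.Icc 0 T) ∧
  IntegrableOn hdot (Set.Icc 0 T) volume ∧
  (∀ t ∈ Set.Icc (0:ℝ) T, h t = h 0 + ∫ s in (0:ℝ)..t, hdot s) ∧
  (∫⁻ s in Set.Icc (0:ℝ) T, ((‖hdot s‖₊ : ℝ≥0∞) ^ 2)) < ⊤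

theorem intervalIntegral_sub_mul_eq_intervalIntegral_primitive {K : ℝ → ℝ} {a b : ℝ}
    (hK : IntervalIntegrable K volume a b) :
    ∫ s in a..b, (b - s) * K s = ∫ s in a..b, ∫ r in a..s, K r := by
  have hprim := hK.absolutelyContinuousOnInterval_intervalIntegral (c := a) left_mem_uIcc
  have hlin : AbsolutelyContinuousOnInterval (fun s => b - s) a b :=
    (contDiff_const.sub contDiff_id).contDiffOn.absolutelyContinuousOnInterval
  have hderiv : ∀ᵐ s, s ∈ uIoc a b → (b - s) * deriv (fun x => ∫ r in a..x, K r) s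
      = (b - s) * K s := by
    filter_upwards [hK.ae_hasDerivAt_integral] with s hs hs'
    rw [(hs (uIoc_subset_uIcc hs') a left_mem_uIcc).deriv]
  have hibp := hlin.integral_mul_deriv_eq_deriv_mul hprim
  rw [intervalIntegral.integral_congr_ae hderiv] at hibp
  simpa using hibp

theorem eqOn_Icc_of_forall_intervalIntegral_eq {f g : ℝ → ℝ} {a b : ℝ} (hab : a < b)
    (hf : ContinuousOn f (Icc a b)) (hg : ContinuousOn g (Icc a b))
    (hfg : ∀ t ∈ Icc a b, ∫ s in a..t, f s = ∫ s in a..t, g s) : EqOn f g (Icc a b) := by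
  have hderiv : ∀ {e : ℝ → ℝ}, ContinuousOn e (Icc a b) → ∀ t ∈ Ioo a b,
      HasDerivAt (fun x => ∫ s in a..x, e s) (e t) t := fun he t ht =>
    intervalIntegral.integral_hasDerivAt_right
      (he.mono (uIcc_subset_Icc (left_mem_Icc.2 hab.le)
        (Ioo_subset_Icc_self ht))).intervalIntegrable
      ((he.mono Ioo_subset_Icc_self).stronglyMeasurableAtFilter isOpen_Ioo t ht)
      (he.continuousAt (Icc_mem_nhds ht.1 ht.2))
  have hIoo : EqOn f g (Ioo a b) := fun t ht =>
    (hderiv hf t ht).unique ((hderiv hg t ht).congr_of_eventuallyEq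
      (eventually_of_mem (Icc_mem_nhds ht.1 ht.2) hfg))
  exact hIoo.of_subset_closure hf hg Ioo_subset_Icc_self (closure_Ioo hab.ne).superset

theorem intervalIntegral_indicator_le_const {s t : ℝ} (hs : 0 ≤ s) (ht : 0 ≤ t) (a : ℝ) :
    ∫ r in (0:ℝ)..s, {x | x ≤ t}.indicator (fun _ => a) r = min s t * a := by
  rcases le_total s t with hst | hts
  · rw [min_eq_left hst, intervalIntegral.integral_congr (g := fun _ => a) fun r hr => ?_]
    · simp
    · simp [indicator, ((uIcc_of_le hs ▸ hr).2.trans hst)]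
  · rw [min_eq_right hts, intervalIntegral.integral_indicator ⟨ht, hts⟩]
    simp

theorem setIntegral_Icc_indicator_le {f : ℝ → ℝ} {a b t : ℝ} (ht : t ∈ Icc a b) :
    ∫ s in Icc a b, {x | x ≤ t}.indicator f s = ∫ s in a..t, f s := by
  rw [integral_Icc_eq_integral_Ioc, ← intervalIntegral.integral_of_le (ht.1.trans ht.2),
    intervalIntegral.integral_indicator ht]

theorem memLp_two_iff_lintegral_nnnorm_sq_lt_top {α E : Type*} [MeasurableSpace α]
    [NormedAddCommGroup E] {μ : Measure α} {f : α → E} (hf : AEStronglyMeasurable f μ) :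
    MemLp f 2 μ ↔ ∫⁻ x, (‖f x‖₊ : ℝ≥0∞) ^ 2 ∂μ < ⊤ := by
  rw [MemLp, eLpNorm_lt_top_iff_lintegral_rpow_enorm_lt_top two_ne_zero ENNReal.ofNat_ne_top]
  simp [hf, enorm_eq_nnnorm]

theorem setIntegral_intervalIntegral_Lp_comm {α : Type*} [MeasurableSpace α] {μ : Measure α}
    {S : Set α} (hS : MeasurableSet S) (hμS : μ S ≠ ⊤) {k : ℝ → Lp ℝ 2 μ} {a b : ℝ}
    (hk : IntervalIntegrable k volume a b) :
    ∫ x in S, (∫ s in a..b, k s : Lp ℝ 2 μ) x ∂μ = ∫ s in a..b, ∫ x in S, k s x ∂μ := by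
  simp_rw [← L2.inner_indicatorConstLp_one hS hμS, ← innerSL_apply_apply ℝ]
  exact ((innerSL ℝ _).intervalIntegral_comp_comm hk).symm

theorem integrableOn_setIntegral_Lp {α : Type*} [MeasurableSpace α] {μ : Measure α}
    {S : Set α} (hS : MeasurableSet S) (hμS : μ S ≠ ⊤) {k : ℝ → Lp ℝ 2 μ} {s : Set ℝ}
    (hk : IntegrableOn k s) : IntegrableOn (fun r => ∫ x in S, k r x ∂μ) s :=
  show Integrable _ _ by
    simpa only [innerSL_apply_apply, L2.inner_indicatorConstLp_one] using
      (innerSL ℝ (indicatorConstLp 2 hS hμS (1:ℝ))).integrable_comp hk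

section Density

variable {β c : ℝ} {S : Set ℝ}

@[fun_prop]
theorem measurable_kappa : Measurable (kappa β) :=
  Measurable.ite measurableSet_Iic (measurable_id.pow_const β)
    ((measurable_const.sub measurable_id).pow_const β)

theorem kappa_pos {u : ℝ} (hu : u ∈ Ioo (0:ℝ) 1) : 0 < kappa β u := by
  unfold kappa
  split_ifs
  · exact Real.rpow_pos_of_pos hu.1 β
  · exact Real.rpow_pos_of_pos (sub_pos.2 hu.2) β

instance isFiniteMeasure_lambda01 : IsFiniteMeasure lambda01 := by
  unfold lambda01; infer_instance

theorem memLp_id_lambda01 : MemLp (fun u : ℝ => u) 2 lambda01 :=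
  MemLp.of_bound aestronglyMeasurable_id 1 <| (ae_restrict_mem measurableSet_Icc).mono
    fun u hu => by simpa [abs_le] using ⟨by linarith [hu.1], hu.2⟩

theorem ae_kappa_pos : ∀ᵐ u ∂lambda01, 0 < kappa β u := by
  rw [lambda01, ← Measure.restrict_congr_set Ioo_ae_eq_Icc]
  exact (ae_restrict_mem measurableSet_Ioo).mono fun u => kappa_pos

theorem lambda01_ac_muInv : lambda01 ≪ muInv β :=
  withDensity_absolutelyContinuous' measurable_kappa.inv.ennreal_ofReal.aemeasurable
    (ae_kappa_pos.mono fun u hu => by simpa using hu)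

theorem muMeas_eq_withDensity_toNNReal :
    muMeas β = lambda01.withDensity fun u => ((kappa β u).toNNReal : ℝ≥0∞) :=
  rfl

theorem lambda01_eq_withDensity_muMeas :
    lambda01 = (muMeas β).withDensity fun u => ((kappa β u)⁻¹.toNNReal : ℝ≥0∞) := by
  refine (withDensity_inv_same (μ := lambda01) measurable_kappa.ennreal_ofReal
    (ae_kappa_pos.mono fun u hu => by simpa using hu) (by simp)).symm.trans
    (withDensity_congr_ae ?_)
  exact (withDensity_absolutelyContinuous _ _).ae_le <|
    ae_kappa_pos.mono fun u hu => (ENNReal.ofReal_inv_of_pos hu).symm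

theorem muInv_ne_top (hc : 0 < c) (hS : MeasurableSet S) (hSc : S ⊆ {u | c ≤ kappa β u}) :
    muInv β S ≠ ⊤ := by
  rw [muInv, withDensity_apply _ hS]
  refine ne_top_of_le_ne_top (b := ∫⁻ _ in S, ENNReal.ofReal c⁻¹ ∂lambda01) ?_
    (setLIntegral_mono' hS fun u hu => ENNReal.ofReal_le_ofReal ?_)
  · simp [lintegral_const, ENNReal.mul_ne_top, measure_ne_top]
  · exact inv_anti₀ hc (hSc hu)

end Density

section Representation

variable {β c : ℝ} {S : Set ℝ}

theorem toNNReal_inv_kappa_smul_indicator (hc : 0 < c) (hSc : S ⊆ {u | c ≤ kappa β u})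
    (f : ℝ → ℝ) (u : ℝ) :
    (kappa β u)⁻¹.toNNReal • S.indicator f u = S.indicator (fun u => (kappa β u)⁻¹) u * f u := by
  by_cases hu : u ∈ S
  · simp [hu, NNReal.smul_def, (hc.trans_le (hSc hu)).le]
  · simp [hu]

theorem memLp_indicator_inv_kappa (hc : 0 < c) (hS : MeasurableSet S)
    (hSc : S ⊆ {u | c ≤ kappa β u}) :
    MemLp (S.indicator fun u => (kappa β u)⁻¹) 2 (muMeas β) := by
  have hmeas : Measurable (S.indicator fun u => (kappa β u)⁻¹) :=
    measurable_kappa.inv.indicator hS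
  rw [memLp_two_iff_integrable_sq hmeas.aestronglyMeasurable, muMeas_eq_withDensity_toNNReal,
    integrable_withDensity_iff_integrable_smul (by fun_prop)]
  refine Integrable.of_bound (by fun_prop) c⁻¹ (Eventually.of_forall fun u => ?_)
  by_cases hu : u ∈ S
  · have hκ : 0 < kappa β u := hc.trans_le (hSc hu)
    simp only [hu, indicator_of_mem, NNReal.smul_def, Real.coe_toNNReal _ hκ.le, smul_eq_mul]
    rw [sq, ← mul_assoc, mul_inv_cancel₀ hκ.ne', one_mul, Real.norm_of_nonneg (inv_nonneg.2 hκ.le)]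
    exact inv_anti₀ hc (hSc hu)
  · simp [hu, hc.le]

theorem integral_indicator_inv_kappa_mul (hc : 0 < c) (hS : MeasurableSet S)
    (hSc : S ⊆ {u | c ≤ kappa β u}) (f : ℝ → ℝ) :
    ∫ u, S.indicator (fun u => (kappa β u)⁻¹) u * f u ∂muMeas β = ∫ u in S, f u ∂lambda01 := by
  rw [← integral_indicator hS, lambda01_eq_withDensity_muMeas (β := β),
    integral_withDensity_eq_integral_smul (by fun_prop)]
  simp_rw [toNNReal_inv_kappa_smul_indicator hc hSc]

theorem integrableOn_lambda01_of_memLp (hc : 0 < c) (hS : MeasurableSet S)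
    (hSc : S ⊆ {u | c ≤ kappa β u}) {f : ℝ → ℝ} (hf : MemLp f 2 (muMeas β)) :
    IntegrableOn f S lambda01 := by
  rw [← integrable_indicator_iff hS, lambda01_eq_withDensity_muMeas (β := β),
    integrable_withDensity_iff_integrable_smul (by fun_prop)]
  simp_rw [toNNReal_inv_kappa_smul_indicator hc hSc]
  exact (memLp_indicator_inv_kappa hc hS hSc).integrable_mul hf

theorem exists_inner_eq_setIntegral (hc : 0 < c) (hS : MeasurableSet S)
    (hSc : S ⊆ {u | c ≤ kappa β u}) :
    ∃ w : Lp ℝ 2 (muMeas β), ∀ f : Lp ℝ 2 (muMeas β), inner ℝ w f = ∫ u in S, f u ∂lambda01 := by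
  refine ⟨(memLp_indicator_inv_kappa hc hS hSc).toLp _, fun f => ?_⟩
  rw [L2.inner_def, ← integral_indicator_inv_kappa_mul hc hS hSc]
  refine integral_congr_ae ((memLp_indicator_inv_kappa hc hS hSc).coeFn_toLp.mono fun u hu => ?_)
  simp [hu, mul_comm]

end Representation

section TestFunctions

variable {T β : ℝ} {S : Set ℝ}

theorem integral_smul_indicatorConstLp_mul (hS : MeasurableSet S) (hfin : muInv β S ≠ ⊤)
    (a : ℝ) (v : ℝ → ℝ) :
    ∫ u, ((a • indicatorConstLp 2 hS hfin (1:ℝ) : Lp ℝ 2 (muInv β)) : ℝ → ℝ) u * v u ∂lambda01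
      = a * ∫ u in S, v u ∂lambda01 := by
  have hcoe : ((a • indicatorConstLp 2 hS hfin (1:ℝ) : Lp ℝ 2 (muInv β)) : ℝ → ℝ)
      =ᵐ[lambda01] fun u => a * S.indicator (fun _ => 1) u := by
    refine (lambda01_ac_muInv (β := β)).ae_le ?_
    filter_upwards [Lp.coeFn_smul a (indicatorConstLp 2 hS hfin (1:ℝ)),
      indicatorConstLp_coeFn (hs := hS) (hμs := hfin) (c := (1:ℝ))] with u hsmul hind
    rw [hsmul, Pi.smul_apply, hind, smul_eq_mul]
  rw [integral_congr_ae (hcoe.mono fun u hu => by rw [hu]), ← integral_const_mul,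
    ← integral_indicator hS]
  congr 1 with u
  by_cases hu : u ∈ S <;> simp [hu, mul_comm]

theorem memH_smul_const {ρ ρ' : ℝ → ℝ} (hρ : ContinuousOn ρ (Icc 0 T))
    (hρ' : MemLp ρ' 2 (volume.restrict (Icc 0 T)))
    (hftc : ∀ t ∈ Icc (0:ℝ) T, ρ t = ρ 0 + ∫ s in (0:ℝ)..t, ρ' s) (g : Lp ℝ 2 (muInv β)) :
    MemH T β (fun s => ρ s • g) (fun s => ρ' s • g) := by
  refine ⟨hρ.smul continuousOn_const, (hρ'.integrable one_le_two).smul_const g,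
    fun t ht => ?_, ?_⟩
  · rw [intervalIntegral.integral_smul_const]
    exact (congrArg (· • g) (hftc t ht)).trans (add_smul _ _ g)
  · simp_rw [nnnorm_smul, ENNReal.coe_mul, mul_pow]
    rw [lintegral_mul_const' _ _ (by simp)]
    exact ENNReal.mul_lt_top ((memLp_two_iff_lintegral_nnnorm_sq_lt_top hρ'.1).1 hρ') (by simp)

theorem memH_ramp {t : ℝ} (ht : t ∈ Icc 0 T) (g : Lp ℝ 2 (muInv β)) :
    MemH T β (fun s => (t - min s t) • g)
      (fun s => {x | x ≤ t}.indicator (fun _ => (-1 : ℝ)) s • g) := by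
  refine memH_smul_const (T := T) (ρ := fun s => t - min s t)
    (continuous_const.sub (continuous_id.min continuous_const)).continuousOn
    ((memLp_const (-1)).indicator (s := {x | x ≤ t}) measurableSet_Iic) (fun s hs => ?_) g
  rw [intervalIntegral_indicator_le_const hs.1 ht.1, min_eq_left ht.1]
  ring

end TestFunctions

def PairingIdentity (T β : ℝ) (φ : ℝ → Lp ℝ 2 (muMeas β)) (k : ℝ → Lp ℝ 2 lambda01) : Prop :=
  ∀ h hdot : ℝ → Lp ℝ 2 (muInv β), MemH T β h hdot →
    (∫ u, (h T : ℝ → ℝ) u * (φ T : ℝ → ℝ) u ∂lambda01)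
      - (∫ u, (h 0 : ℝ → ℝ) u * u ∂lambda01)
      - (∫ s in Icc (0:ℝ) T, (∫ u, (hdot s : ℝ → ℝ) u * (φ s : ℝ → ℝ) u ∂lambda01))
    = ∫ s in Icc (0:ℝ) T, (∫ u, (h s : ℝ → ℝ) u * (k s : ℝ → ℝ) u ∂lambda01)

section Pairing

variable {T β c : ℝ} {S : Set ℝ} {φ : ℝ → Lp ℝ 2 (muMeas β)} {k : ℝ → Lp ℝ 2 lambda01}

theorem intervalIntegral_setIntegral_eq_of_pairing (hc : 0 < c) (hS : MeasurableSet S)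
    (hSc : S ⊆ {u | c ≤ kappa β u}) (hk : IntegrableOn k (Icc 0 T))
    (hpairing : PairingIdentity T β φ k) {t : ℝ} (ht : t ∈ Icc 0 T) :
    ∫ s in (0:ℝ)..t, ∫ u in S, φ s u ∂lambda01 = t * ∫ u in S, u ∂lambda01
      + ∫ s in (0:ℝ)..t, ∫ r in (0:ℝ)..s, ∫ u in S, k r u ∂lambda01 := by
  set F := fun s => ∫ u in S, φ s u ∂lambda01
  set K := fun s => ∫ u in S, k s u ∂lambda01
  have h : (t - t) * F T - (t - 0) * ∫ u in S, u ∂lambda01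
      - ∫ s in Icc 0 T, {x | x ≤ t}.indicator (fun _ => (-1:ℝ)) s * F s
      = ∫ s in Icc 0 T, (t - min s t) * K s := by
    simpa only [integral_smul_indicatorConstLp_mul, min_eq_right ht.2, min_eq_left ht.1] using
      hpairing _ _ (memH_ramp ht (indicatorConstLp 2 hS (muInv_ne_top hc hS hSc) (1:ℝ)))
  have hF : ∫ s in Icc 0 T, {x | x ≤ t}.indicator (fun _ => (-1:ℝ)) s * F s
      = -∫ s in (0:ℝ)..t, F s := by
    simp_rw [← indicator_mul_left, setIntegral_Icc_indicator_le ht, neg_one_mul,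
      intervalIntegral.integral_neg]
  have hK : ∫ s in Icc 0 T, (t - min s t) * K s = ∫ s in (0:ℝ)..t, ∫ r in (0:ℝ)..s, K r := by
    have hramp : ∀ s, (t - min s t) * K s
        = {x | x ≤ t}.indicator (fun s => (t - s) * K s) s := by
      intro s
      by_cases hst : s ≤ t
      · simp [hst]
      · simp [hst, min_eq_right (le_of_not_ge hst)]
    simp_rw [hramp, setIntegral_Icc_indicator_le ht]
    exact intervalIntegral_sub_mul_eq_intervalIntegral_primitive
      ((integrableOn_setIntegral_Lp hS (measure_ne_top _ _) hk).mono_set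
        (uIcc_subset_Icc (left_mem_Icc.2 (ht.1.trans ht.2)) ht)).intervalIntegrable
  rw [hF, hK] at h
  linarith

theorem setIntegral_eq_add_intervalIntegral_of_pairing (hT : 0 < T) (hc : 0 < c)
    (hS : MeasurableSet S) (hSc : S ⊆ {u | c ≤ kappa β u}) (hφ : ContinuousOn φ (Icc 0 T))
    (hk : IntegrableOn k (Icc 0 T)) (hpairing : PairingIdentity T β φ k) :
    ∀ t ∈ Icc (0:ℝ) T, ∫ u in S, φ t u ∂lambda01
      = ∫ u in S, u ∂lambda01 + ∫ s in (0:ℝ)..t, ∫ u in S, k s u ∂lambda01 := by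
  have hF : ContinuousOn (fun s => ∫ u in S, φ s u ∂lambda01) (Icc 0 T) := by
    obtain ⟨w, hw⟩ := exists_inner_eq_setIntegral hc hS hSc
    simpa only [hw] using ContinuousOn.inner (𝕜 := ℝ) (continuousOn_const (c := w)) hφ
  have hC : ContinuousOn (fun s => ∫ r in (0:ℝ)..s, ∫ u in S, k r u ∂lambda01) (Icc 0 T) := by
    rw [← uIcc_of_le hT.le]
    exact intervalIntegral.continuousOn_primitive_interval
      (by simpa only [uIcc_of_le hT.le] using
        integrableOn_setIntegral_Lp hS (measure_ne_top _ _) hk)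
  refine eqOn_Icc_of_forall_intervalIntegral_eq hT hF (continuousOn_const.add hC) fun t ht => ?_
  rw [intervalIntegral_setIntegral_eq_of_pairing hc hS hSc hk hpairing ht,
    intervalIntegral.integral_add intervalIntegrable_const
      (hC.mono (uIcc_subset_Icc (left_mem_Icc.2 hT.le) ht)).intervalIntegrable,
    intervalIntegral.integral_const, smul_eq_mul, sub_zero]

end Pairing

theorem ae_eq_of_forall_setIntegral_eq_of_le_kappa {β : ℝ} {f g : ℝ → ℝ}
    (hf : ∀ c > 0, IntegrableOn f {u | c ≤ kappa β u} lambda01)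
    (hg : ∀ c > 0, IntegrableOn g {u | c ≤ kappa β u} lambda01)
    (hfg : ∀ c > 0, ∀ S, MeasurableSet S → S ⊆ {u | c ≤ kappa β u} →
      ∫ u in S, f u ∂lambda01 = ∫ u in S, g u ∂lambda01) :
    f =ᵐ[lambda01] g := by
  set L : ℕ → Set ℝ := fun n => {u | ((n:ℝ) + 1)⁻¹ ≤ kappa β u}
  have hcover : ∀ᵐ u ∂lambda01, u ∈ ⋃ n, L n := ae_kappa_pos.mono fun u hu => by
    obtain ⟨n, hn⟩ := exists_nat_one_div_lt hu
    exact mem_iUnion.2 ⟨n, by simpa [L, one_div] using hn.le⟩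
  rw [← Measure.restrict_eq_self_of_ae_mem hcover, EventuallyEq, ae_restrict_iUnion_iff]
  intro n
  have hn : (0:ℝ) < ((n:ℝ) + 1)⁻¹ := by positivity
  refine ae_eq_of_forall_setIntegral_eq_of_sigmaFinite
    (fun s _ _ => Integrable.restrict (hf _ hn)) (fun s _ _ => Integrable.restrict (hg _ hn))
    fun s hs _ => ?_
  rw [Measure.restrict_restrict hs]
  exact hfg _ hn _ (hs.inter (measurableSet_le measurable_const measurable_kappa))
    inter_subset_right

theorem integration_by_parts_characterization_general
    (T : ℝ) (hT : 0 < T) (β : ℝ)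
    (φ : ℝ → Lp ℝ 2 (muMeas β)) (hφcont : ContinuousOn φ (Set.Icc 0 T))
    (k : ℝ → Lp ℝ 2 lambda01)
    (hkmeas : AEStronglyMeasurable k (volume.restrict (Set.Icc (0:ℝ) T)))
    (hkL2 : (∫⁻ s in Set.Icc (0:ℝ) T, ((‖k s‖₊ : ℝ≥0∞) ^ 2)) < ⊤)
    (hpairing : ∀ h hdot : ℝ → Lp ℝ 2 (muInv β), MemH T β h hdot →
      (∫ u, (h T : ℝ → ℝ) u * (φ T : ℝ → ℝ) u ∂lambda01)
        - (∫ u, (h 0 : ℝ → ℝ) u * u ∂lambda01)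
        - (∫ s in Set.Icc (0:ℝ) T,
            (∫ u, (hdot s : ℝ → ℝ) u * (φ s : ℝ → ℝ) u ∂lambda01))
      = ∫ s in Set.Icc (0:ℝ) T,
          (∫ u, (h s : ℝ → ℝ) u * (k s : ℝ → ℝ) u ∂lambda01)) :
    ∀ t ∈ Set.Icc (0:ℝ) T,
      MemLp (φ t : ℝ → ℝ) 2 lambda01 ∧
      (φ t : ℝ → ℝ) =ᵐ[lambda01]
        fun u => u + ((((∫ s in (0:ℝ)..t, k s) : Lp ℝ 2 lambda01) : ℝ → ℝ) u) := by
  intro t ht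
  have hk : IntegrableOn k (Icc 0 T) :=
    (((memLp_two_iff_lintegral_nnnorm_sq_lt_top hkmeas).2 hkL2).integrable one_le_two)
  have hkt : IntervalIntegrable k volume 0 t :=
    (hk.mono_set (uIcc_subset_Icc (left_mem_Icc.2 hT.le) ht)).intervalIntegrable
  have hψ : MemLp (fun u => u + ((∫ s in (0:ℝ)..t, k s : Lp ℝ 2 lambda01) : ℝ → ℝ) u)
      2 lambda01 :=
    memLp_id_lambda01.add (Lp.memLp _)
  have hae : (φ t : ℝ → ℝ) =ᵐ[lambda01]
      fun u => u + ((∫ s in (0:ℝ)..t, k s : Lp ℝ 2 lambda01) : ℝ → ℝ) u := by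
    refine ae_eq_of_forall_setIntegral_eq_of_le_kappa
      (fun c hc => integrableOn_lambda01_of_memLp hc
        (measurableSet_le measurable_const measurable_kappa) subset_rfl (Lp.memLp _))
      (fun c _ => (hψ.integrable one_le_two).integrableOn) fun c hc S hS hSc => ?_
    rw [setIntegral_eq_add_intervalIntegral_of_pairing hT hc hS hSc hφcont hk hpairing t ht,
      integral_add (memLp_id_lambda01.integrable one_le_two).integrableOn
        ((Lp.memLp _).integrable one_le_two).integrableOn,
      setIntegral_intervalIntegral_Lp_comm hS (measure_ne_top _ _) hkt]
  exact ⟨hψ.ae_eq hae.symm, hae⟩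

/-- Let `φ ∈ C([0,T], L²(μ))` with `φ(0) = id` and `k ∈ L²([0,T], L²(λ))`.
If for every `h ∈ H` one has
`⟨h(T), φ(T)⟩ − ⟨h(0), id⟩ − ∫₀ᵀ ⟨ḣ(s), φ(s)⟩ ds = ∫₀ᵀ ⟨h(s), k(s)⟩ ds`
(pairings in `L²(λ)`), then `φ` takes values in `L²(λ)` and
`φ(t) = id + ∫₀ᵗ k(s) ds` in `L²(λ)` for every `t ∈ [0,T]`; in particular `φ` is continuous and
absolutely continuous as an `L²(λ)`-valued function with derivative `k`. -/
theorem integration_by_parts_characterization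
    (T : ℝ) (hT : 0 < T) (β : ℝ) (hβ : 1 < β)
    (φ : ℝ → Lp ℝ 2 (muMeas β)) (hφcont : ContinuousOn φ (Set.Icc 0 T))
    (hφ0 : (φ 0 : ℝ → ℝ) =ᵐ[muMeas β] fun u => u)
    (k : ℝ → Lp ℝ 2 lambda01)
    (hkmeas : AEStronglyMeasurable k (volume.restrict (Set.Icc (0:ℝ) T)))
    (hkL2 : (∫⁻ s in Set.Icc (0:ℝ) T, ((‖k s‖₊ : ℝ≥0∞) ^ 2)) < ⊤)
    (hpairing : ∀ h hdot : ℝ → Lp ℝ 2 (muInv β), MemH T β h hdot →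
      (∫ u, (h T : ℝ → ℝ) u * (φ T : ℝ → ℝ) u ∂lambda01)
        - (∫ u, (h 0 : ℝ → ℝ) u * u ∂lambda01)
        - (∫ s in Set.Icc (0:ℝ) T,
            (∫ u, (hdot s : ℝ → ℝ) u * (φ s : ℝ → ℝ) u ∂lambda01))
      = ∫ s in Set.Icc (0:ℝ) T,
          (∫ u, (h s : ℝ → ℝ) u * (k s : ℝ → ℝ) u ∂lambda01)) :
    ∀ t ∈ Set.Icc (0:ℝ) T,
      MemLp (φ t : ℝ → ℝ) 2 lambda01 ∧
      (φ t : ℝ → ℝ) =ᵐ[lambda01]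
        fun u => u + ((((∫ s in (0:ℝ)..t, k s) : Lp ℝ 2 lambda01) : ℝ → ℝ) u) :=
  integration_by_parts_characterization_general T hT β φ hφcont k hkmeas hkL2 hpairing

end
end
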